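/- arXiv:2109.08856 — 7 statements merged into one kernel-verified Lean document; each statement's English description precedes it below -/
import Mathlib

section
/- For every assignment problem and every preference profile, every deterministic assignment that satisfies favoring-eagerness-for-remaining-items (FERI) also satisfies Pareto-efficiency (PE). -/
open Finset

noncomputable section

namespace FeriPaper

/-- A preference profile: `R j o o'` means agent `j` strictly prefers item `o` to `o'`. -/
abbrev Pref (n : ℕ) := Fin n → Fin n → Fin n → Prop

/-- Every agent's preference is a strict linear (total) order on the items. -/
def IsProfile {n : ℕ} (R : Pref n) : Prop :=
  ∀ j : Fin n, IsStrictTotalOrder (Fin n) (R j)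

/-- Profiles as a type (for mechanisms). -/
def Profile (n : ℕ) := { R : Pref n // IsProfile R }

/-- `o` is agent `j`'s most preferred item in the set `S`. -/
def IsTopIn {n : ℕ} (R : Pref n) (j : Fin n) (S : Set (Fin n)) (o : Fin n) : Prop :=
  o ∈ S ∧ ∀ o' ∈ S, o' ≠ o → R j o o'

/-- `Tunion R A r` is the union `T_1(A) ∪ ⋯ ∪ T_r(A)` (so `Tunion R A 0 = ∅`). -/
def Tunion {n : ℕ} (R : Pref n) (A : Equiv.Perm (Fin n)) : ℕ → Set (Fin n)
  | 0 => ∅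
  | r + 1 =>
      Tunion R A r ∪
        {o | ∃ j : Fin n, A j ∉ Tunion R A r ∧ IsTopIn R j (Tunion R A r)ᶜ o}

/-- `Tset R A r` is the set `T_{r+1}(A)` (0-based round index). -/
def Tset {n : ℕ} (R : Pref n) (A : Equiv.Perm (Fin n)) (r : ℕ) : Set (Fin n) :=
  {o | ∃ j : Fin n, A j ∉ Tunion R A r ∧ IsTopIn R j (Tunion R A r)ᶜ o}

/-- Favoring-eagerness-for-remaining-items (FERI). -/
def FERI {n : ℕ} (R : Pref n) (A : Equiv.Perm (Fin n)) : Prop :=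
  ∀ r : ℕ, ∀ o ∈ Tset R A r, IsTopIn R (A.symm o) (Tunion R A r)ᶜ o

/-- Pareto efficiency (PE) of a deterministic assignment. -/
def ParetoEff {n : ℕ} (R : Pref n) (A : Equiv.Perm (Fin n)) : Prop :=
  ¬ ∃ (A' : Equiv.Perm (Fin n)) (N' : Set (Fin n)), N'.Nonempty ∧
      (∀ j ∈ N', R j (A' j) (A j)) ∧ ∀ k, k ∉ N' → A' k = A k

/-- Number of agents receiving their overall first choice. -/
def firstChoiceCount {n : ℕ} (R : Pref n) (A : Equiv.Perm (Fin n)) : ℕ :=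
  {j : Fin n | IsTopIn R j Set.univ (A j)}.ncard

/-- First-choice maximality (FCM). -/
def FCM {n : ℕ} (R : Pref n) (A : Equiv.Perm (Fin n)) : Prop :=
  ¬ ∃ A' : Equiv.Perm (Fin n), firstChoiceCount R A < firstChoiceCount R A'

/-- Rank of item `o` in agent `j`'s preference (1 = most preferred). -/
def rank {n : ℕ} (R : Pref n) (j o : Fin n) : ℕ :=
  {o' : Fin n | R j o' o ∨ o' = o}.ncard

/-- Favoring-higher-ranks (FHR). -/
def FHR {n : ℕ} (R : Pref n) (A : Equiv.Perm (Fin n)) : Prop :=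
  ∀ j k : Fin n, rank R j (A j) ≤ rank R k (A j) ∨ rank R k (A k) < rank R k (A j)

/-- Popularity (POP). -/
def POP {n : ℕ} (R : Pref n) (A : Equiv.Perm (Fin n)) : Prop :=
  ¬ ∃ A' : Equiv.Perm (Fin n),
      {j : Fin n | R j (A j) (A' j)}.ncard < {j : Fin n | R j (A' j) (A j)}.ncard

/-- Signature of a deterministic assignment: `signature R A r` is the number of agents
    assigned their `r`-th ranked item. -/
def signature {n : ℕ} (R : Pref n) (A : Equiv.Perm (Fin n)) (r : ℕ) : ℕ :=
  {j : Fin n | rank R j (A j) = r}.ncard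

/-- `x` dominates `y` as signatures. -/
def SigDom (x y : ℕ → ℕ) : Prop :=
  ∃ r : ℕ, y r < x r ∧ ∀ r' < r, y r' ≤ x r'

/-- Rank maximality (RM). -/
def RM {n : ℕ} (R : Pref n) (A : Equiv.Perm (Fin n)) : Prop :=
  ¬ ∃ A' : Equiv.Perm (Fin n), SigDom (signature R A') (signature R A)

/-- A random assignment: a doubly stochastic matrix. -/
def DoublyStochastic {n : ℕ} (P : Fin n → Fin n → ℝ) : Prop :=
  (∀ j o, 0 ≤ P j o) ∧ (∀ j, ∑ o, P j o = 1) ∧ (∀ o, ∑ j, P j o = 1)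

/-- The 0-1 permutation matrix of a deterministic assignment. -/
def permMatrix {n : ℕ} (A : Equiv.Perm (Fin n)) : Fin n → Fin n → ℝ :=
  fun j o => if A j = o then 1 else 0

/-- Upper contour set of item `o` under the strict preference `pr`. -/
def ucs {n : ℕ} (pr : Fin n → Fin n → Prop) (o : Fin n) : Set (Fin n) :=
  {x | pr x o ∨ x = o}

/-- Total probability mass on the upper contour set of `o`. -/
def upperSum {n : ℕ} (pr : Fin n → Fin n → Prop) (p : Fin n → ℝ) (o : Fin n) : ℝ :=
  ∑ x, (ucs pr o).indicator p x

/-- `p` (weakly) stochastically dominates `q` w.r.t. the strict preference `pr`. -/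
def SD {n : ℕ} (pr : Fin n → Fin n → Prop) (p q : Fin n → ℝ) : Prop :=
  ∀ o, upperSum pr q o ≤ upperSum pr p o

/-- sd-envy-freeness. -/
def sdEF {n : ℕ} (R : Pref n) (P : Fin n → Fin n → ℝ) : Prop :=
  ∀ j k : Fin n, SD (R j) (P j) (P k)

/-- sd-weak-envy-freeness. -/
def sdWEF {n : ℕ} (R : Pref n) (P : Fin n → Fin n → ℝ) : Prop :=
  ∀ j k : Fin n, SD (R j) (P k) (P j) → P j = P k

/-- The common prefix of the preferences of agents `j` and `k`: items all of whose
    (weak) upper contour sets w.r.t. `j` coincide for `j` and `k`. -/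
def commonPrefix {n : ℕ} (R : Pref n) (j k : Fin n) : Set (Fin n) :=
  {o | ∀ x ∈ ucs (R j) o, ucs (R j) x = ucs (R k) x}

/-- Strong equal treatment of equals (SETE). -/
def SETE {n : ℕ} (R : Pref n) (P : Fin n → Fin n → ℝ) : Prop :=
  ∀ j k : Fin n, ∀ o ∈ commonPrefix R j k, P j o = P k o

/-- A random assignment satisfies a property `X` ex post if it is a convex combination
    of (permutation matrices of) deterministic assignments each satisfying `X`. -/
def ExPost {n : ℕ} (X : Equiv.Perm (Fin n) → Prop) (P : Fin n → Fin n → ℝ) : Prop :=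
  ∃ w : Equiv.Perm (Fin n) → ℝ, (∀ A, 0 ≤ w A) ∧ (∑ A, w A) = 1 ∧
    (∀ A, w A ≠ 0 → X A) ∧ ∀ j o, P j o = ∑ A, w A * permMatrix A j o

/-- Ex-ante favoring-higher-ranks (ea-FHR). -/
def EaFHR {n : ℕ} (R : Pref n) (P : Fin n → Fin n → ℝ) : Prop :=
  ∀ j o, 0 < P j o → ∀ k, rank R k o < rank R j o → upperSum (R k) (P k) o = 1

/-- The eating structure for ea-FERI: `(eaState R P r).1 = M_{P,r+1}` and
    `(eaState R P r).2 o = ⋃_{r' ≤ r+1} E_{P,r'}(o)` (1-based indexing on the right). -/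
def eaState {n : ℕ} (R : Pref n) (P : Fin n → Fin n → ℝ) :
    ℕ → Set (Fin n) × (Fin n → Set (Fin n))
  | 0 => (Set.univ, fun o => {j | IsTopIn R j Set.univ o})
  | r + 1 =>
      let prev := eaState R P r
      let M : Set (Fin n) := {o | ∑ k, (prev.2 o).indicator (fun k' => P k' o) k < 1}
      (M, fun o => prev.2 o ∪ {j | IsTopIn R j M o})

/-- `eaM R P r = M_{P,r+1}` (0-based round index). -/
def eaM {n : ℕ} (R : Pref n) (P : Fin n → Fin n → ℝ) (r : ℕ) : Set (Fin n) :=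
  (eaState R P r).1

/-- `eaE R P r o = E_{P,r+1}(o)` (0-based round index). -/
def eaE {n : ℕ} (R : Pref n) (P : Fin n → Fin n → ℝ) (r : ℕ) (o : Fin n) : Set (Fin n) :=
  {j | IsTopIn R j (eaM R P r) o}

/-- Ex-ante FERI (ea-FERI). -/
def EaFERI {n : ℕ} (R : Pref n) (P : Fin n → Fin n → ℝ) : Prop :=
  ∀ r : ℕ, ∀ o ∈ eaM R P r, ∀ j : Fin n, (∃ r' < r, j ∈ eaE R P r' o) →
    upperSum (R j) (P j) o = 1

/-- sd-Pareto-efficiency (sd-PE). -/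
def SdPE {n : ℕ} (R : Pref n) (P : Fin n → Fin n → ℝ) : Prop :=
  ¬ ∃ Q : Fin n → Fin n → ℝ, DoublyStochastic Q ∧ Q ≠ P ∧ ∀ j, SD (R j) (Q j) (P j)

/-- `A` is the output of the adaptive Boston mechanism with priority order `prio`
    (`prio j k` means `j` has higher priority than `k`): in every round, every item that
    receives applicants is assigned to its highest-priority applicant. -/
def ABMOutcome {n : ℕ} (prio : Fin n → Fin n → Prop) (R : Pref n)
    (A : Equiv.Perm (Fin n)) : Prop :=
  ∀ r : ℕ, ∀ o ∈ Tset R A r,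
    IsTopIn R (A.symm o) (Tunion R A r)ᶜ o ∧
      ∀ j : Fin n, A j ∉ Tunion R A r → IsTopIn R j (Tunion R A r)ᶜ o →
        j ≠ A.symm o → prio (A.symm o) j

end FeriPaper

namespace FeriPaper

/-- A strict total order on a finite nonempty set has a top element. -/
private lemma finset_exists_top {α : Type*} (r : α → α → Prop) (h : IsStrictTotalOrder α r)
    (s : Finset α) (hs : s.Nonempty) : ∃ m ∈ s, ∀ x ∈ s, x ≠ m → r m x := by
  classical
  induction hs using Finset.Nonempty.cons_induction with
  | singleton a => exact ⟨a, by simp, by simp⟩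
  | cons a s ha hs ih =>
      obtain ⟨m, hm, hmax⟩ := ih
      haveI := h
      rcases trichotomous_of r a m with hlt | heq | hgt
      · refine ⟨a, by simp, ?_⟩
        intro x hx hxa
        rcases Finset.mem_cons.mp hx with rfl | hxs
        · exact absurd rfl hxa
        · by_cases hxm : x = m
          · exact hxm ▸ hlt
          · exact trans_of r hlt (hmax x hxs hxm)
      · exact absurd (heq ▸ hm) ha
      · refine ⟨m, Finset.mem_cons.mpr (Or.inr hm), ?_⟩
        intro x hx hxm
        rcases Finset.mem_cons.mp hx with rfl | hxs
        · exact hgt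
        · exact hmax x hxs hxm

private lemma exists_top {n : ℕ} (R : Pref n) (hR : IsProfile R) (j : Fin n)
    (S : Set (Fin n)) (hS : S.Nonempty) : ∃ o, IsTopIn R j S o := by
  classical
  obtain ⟨m, hm, hmax⟩ := finset_exists_top (R j) (hR j) S.toFinset
    (by simpa [Set.toFinset_nonempty] using hS)
  exact ⟨m, Set.mem_toFinset.mp hm, fun o' ho' hne =>
    hmax o' (Set.mem_toFinset.mpr ho') hne⟩

private lemma Tunion_succ {n : ℕ} (R : Pref n) (A : Equiv.Perm (Fin n)) (r : ℕ) :
    Tunion R A (r + 1) = Tunion R A r ∪ Tset R A r := rfl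

private lemma mem_Tunion_iff {n : ℕ} (R : Pref n) (A : Equiv.Perm (Fin n)) (r : ℕ)
    (o : Fin n) : o ∈ Tunion R A r ↔ ∃ r' < r, o ∈ Tset R A r' := by
  induction r with
  | zero => simp [Tunion]
  | succ r ih =>
      rw [Tunion_succ, Set.mem_union, ih]
      constructor
      · rintro (⟨r', hr', h⟩ | h)
        · exact ⟨r', Nat.lt_succ_of_lt hr', h⟩
        · exact ⟨r, Nat.lt_succ_self r, h⟩
      · rintro ⟨r', hr', h⟩
        rcases Nat.lt_succ_iff_lt_or_eq.mp hr' with h' | rfl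
        · exact Or.inl ⟨r', h', h⟩
        · exact Or.inr h

private lemma Tset_notMem {n : ℕ} (R : Pref n) (A : Equiv.Perm (Fin n)) (r : ℕ)
    (o : Fin n) (ho : o ∈ Tset R A r) : o ∉ Tunion R A r := by
  obtain ⟨j, _, htop, _⟩ := ho
  exact htop

private lemma Tset_nonempty {n : ℕ} (R : Pref n) (hR : IsProfile R)
    (A : Equiv.Perm (Fin n)) (r : ℕ) (h : Tunion R A r ≠ Set.univ) :
    (Tset R A r).Nonempty := by
  obtain ⟨o, ho⟩ : ((Tunion R A r)ᶜ).Nonempty := by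
    rw [Set.nonempty_compl]
    exact h
  obtain ⟨m, hm⟩ := exists_top R hR (A.symm o) (Tunion R A r)ᶜ ⟨o, ho⟩
  refine ⟨m, A.symm o, ?_, hm⟩
  simpa using ho

private lemma Tunion_eventually_univ {n : ℕ} (R : Pref n) (hR : IsProfile R)
    (A : Equiv.Perm (Fin n)) : Tunion R A n = Set.univ := by
  have key : ∀ r : ℕ, Tunion R A r = Set.univ ∨ r ≤ (Tunion R A r).ncard := by
    intro r
    induction r with
    | zero => exact Or.inr (Nat.zero_le _)
    | succ r ih =>
        rcases ih with h | h
        · left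
          rw [Tunion_succ, h]
          simp
        · by_cases hu : Tunion R A r = Set.univ
          · left; rw [Tunion_succ, hu]; simp
          · right
            obtain ⟨o, ho⟩ := Tset_nonempty R hR A r hu
            have hno : o ∉ Tunion R A r := Tset_notMem R A r o ho
            have hsub : insert o (Tunion R A r) ⊆ Tunion R A (r + 1) := by
              rw [Tunion_succ]
              intro x hx
              rcases Set.mem_insert_iff.mp hx with rfl | hx
              · exact Or.inr ho
              · exact Or.inl hx
            calc r + 1 ≤ (Tunion R A r).ncard + 1 := by omega
              _ = (insert o (Tunion R A r)).ncard :=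
                  (Set.ncard_insert_of_notMem hno (Set.toFinite _)).symm
              _ ≤ (Tunion R A (r + 1)).ncard :=
                  Set.ncard_le_ncard hsub (Set.toFinite _)
  rcases key n with h | h
  · exact h
  · by_contra hne
    have hss : Tunion R A n ⊂ Set.univ := Set.ssubset_univ_iff.mpr hne
    have := Set.ncard_lt_ncard hss (Set.toFinite _)
    simp [Set.ncard_univ] at this
    omega

/-- Every FERI deterministic assignment is Pareto-efficient. -/
theorem feri_implies_pareto {n : ℕ} (R : Pref n) (hR : IsProfile R)
    (A : Equiv.Perm (Fin n)) (hFERI : FERI R A) : ParetoEff R A := by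
  rintro ⟨A', N', ⟨j₀, hj₀⟩, himp, hfix⟩
  -- Main claim: A' agrees with A on the owner of every item in every round.
  have main : ∀ r : ℕ, ∀ o ∈ Tset R A r, A' (A.symm o) = o := by
    intro r
    induction r using Nat.strong_induction_on with
    | _ r ih =>
      intro o ho
      have hAj : A (A.symm o) = o := A.apply_symm_apply o
      have htop := hFERI r o ho
      by_cases hj : A.symm o ∈ N'
      · have himp' := himp (A.symm o) hj
        rw [hAj] at himp'
        by_contra hne
        haveI := hR (A.symm o)
        have hAo : A' (A.symm o) ∈ Tunion R A r := by
          by_contra hmem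
          have h1 := htop.2 (A' (A.symm o)) hmem hne
          exact irrefl_of (R (A.symm o)) o (trans_of (R (A.symm o)) h1 himp')
        obtain ⟨r', hr', hmem'⟩ := (mem_Tunion_iff R A r _).mp hAo
        have heq := ih r' hr' (A' (A.symm o)) hmem'
        have heq2 : A.symm (A' (A.symm o)) = A.symm o := A'.injective heq
        have : A' (A.symm o) = o := by
          have := congrArg A heq2
          rwa [A.apply_symm_apply, hAj] at this
        exact hne this
      · rw [hfix _ hj, hAj]
  -- Every item appears in some round.
  obtain ⟨r, hr, hmem⟩ := (mem_Tunion_iff R A n (A j₀)).mp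
    (by rw [Tunion_eventually_univ R hR A]; trivial)
  have hfin := main r (A j₀) hmem
  rw [A.symm_apply_apply] at hfin
  have h := himp j₀ hj₀
  rw [hfin] at h
  haveI := hR j₀
  exact irrefl_of (R j₀) (A j₀) h

end FeriPaper
end
end

section
/- There exist an assignment problem with n = 3 agents and 3 items, a preference profile, and a deterministic assignment that satisfies Pareto-efficiency (PE) but does not satisfy favoring-eagerness-for-remaining-items (FERI). -/
open Finset

noncomputable section

namespace FeriPaper

/-- Priority key: agents 0,1 rank 0≻1≻2; agent 2 ranks 1≻0≻2. -/
def exPri : Fin 3 → Fin 3 → Fin 3 := fun j o =>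
  if j = 2 then (if o = 0 then 1 else if o = 1 then 0 else 2) else o

/-- Example profile. -/
def exR : Pref 3 := fun j o o' => exPri j o < exPri j o'

instance exR.dec : ∀ j o o', Decidable (exR j o o') := fun j o o' =>
  decidable_of_iff (exPri j o < exPri j o') Iff.rfl

lemma exR_profile : IsProfile exR := by
  intro j
  refine { trichotomous := ?_, irrefl := ?_, trans := ?_ }
  · revert j; decide
  · revert j; decide
  · revert j; decide

/-- PE does not imply FERI (witnessed with 3 agents and 3 items). -/
theorem pareto_not_imp_feri :
    ∃ R : Pref 3, IsProfile R ∧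
      ∃ A : Equiv.Perm (Fin 3), ParetoEff R A ∧ ¬ FERI R A := by
  refine ⟨exR, exR_profile, Equiv.refl (Fin 3), ?_, ?_⟩
  · rintro ⟨A', N', ⟨j0, hj0⟩, hbet, hfix⟩
    have key : ∀ j : Fin 3, A' j = j ∨ exR j (A' j) j := by
      intro j
      by_cases h : j ∈ N'
      · exact Or.inr (hbet j h)
      · exact Or.inl (hfix j h)
    have h0 : A' 0 = 0 := by
      rcases key 0 with h | h
      · exact h
      · exact absurd h (by generalize A' 0 = x; revert x; decide)
    have h1 : A' 1 = 1 := by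
      rcases key 1 with h | h
      · exact h
      · have hx : A' 1 = 0 := by
          revert h; generalize A' 1 = x; revert x; decide
        exact absurd (A'.injective (h0.trans hx.symm)) (by decide)
    have h2 : A' 2 = 2 := by
      have hne0 : A' 2 ≠ 0 := fun h => absurd (A'.injective (h0.trans h.symm)) (by decide)
      have hne1 : A' 2 ≠ 1 := fun h => absurd (A'.injective (h1.trans h.symm)) (by decide)
      revert hne0 hne1; generalize A' 2 = x; revert x; decide
    have hb : exR j0 (A' j0) j0 := hbet j0 hj0
    have hfix' : A' j0 = j0 := by fin_cases j0 <;> assumption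
    rw [hfix'] at hb
    exact absurd hb (by generalize j0 = x; revert x; decide)
  · intro hferi
    have h1 : (1 : Fin 3) ∈ Tset exR (Equiv.refl (Fin 3)) 0 := by
      refine ⟨2, ?_, ?_, ?_⟩
      · simp [Tunion]
      · simp [Tunion]
      · intro o' _ hne
        exact (by decide : ∀ x : Fin 3, x ≠ 1 → exR 2 1 x) o' hne
    have htop := (hferi 0 1 h1).2 0 (by simp [Tunion]) (by decide)
    exact absurd htop (by decide)

end FeriPaper
end
end

section
/- For every assignment problem and every preference profile, every deterministic assignment that satisfies favoring-eagerness-for-remaining-items (FERI) also satisfies first-choice maximality (FCM). -/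
open Finset

noncomputable section

namespace FeriPaper
/-- Every FERI deterministic assignment is first-choice maximal. -/
theorem feri_implies_fcm {n : ℕ} (R : Pref n) (hR : IsProfile R)
    (A : Equiv.Perm (Fin n)) (hFERI : FERI R A) : FCM R A := by
  rintro ⟨A', hlt⟩
  set T1 : Set (Fin n) := {o | ∃ j, IsTopIn R j Set.univ o} with hT1
  have himage : ∀ B : Equiv.Perm (Fin n),
      (B : Fin n → Fin n) '' {j | IsTopIn R j Set.univ (B j)} ⊆ T1 := by
    rintro B o ⟨j, hj, rfl⟩; exact ⟨j, hj⟩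
  have hle : ∀ B : Equiv.Perm (Fin n), firstChoiceCount R B ≤ T1.ncard := by
    intro B
    have h := Set.ncard_image_of_injective {j | IsTopIn R j Set.univ (B j)} B.injective
    rw [firstChoiceCount, ← h]
    exact Set.ncard_le_ncard (himage B) T1.toFinite
  have heq : (A : Fin n → Fin n) '' {j | IsTopIn R j Set.univ (A j)} = T1 := by
    apply Set.Subset.antisymm (himage A)
    intro o ho
    have h0 : o ∈ Tset R A 0 := by
      obtain ⟨j, hj⟩ := ho
      refine ⟨j, by simp [Tunion], ?_⟩
      simpa [Tunion, Set.compl_empty] using hj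
    have h1 := hFERI 0 o h0
    rw [show Tunion R A 0 = ∅ from rfl, Set.compl_empty] at h1
    refine ⟨A.symm o, ?_, A.apply_symm_apply o⟩
    simpa [A.apply_symm_apply] using h1
  have hA : firstChoiceCount R A = T1.ncard := by
    rw [firstChoiceCount, ← heq, Set.ncard_image_of_injective _ A.injective]
  exact absurd hlt (not_lt.2 (hA ▸ hle A'))

end FeriPaper
end
end

section
/- There exist an assignment problem with n = 6 agents and 6 items, a preference profile, and a deterministic assignment that satisfies favoring-eagerness-for-remaining-items (FERI) but does not satisfy favoring-higher-ranks (FHR). -/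
open Finset

noncomputable section

namespace FeriPaper

/-- rank matrix: `rkEx j o` = 0-based position of item `o` in agent `j`'s preference. -/
def rkEx : Fin 6 → Fin 6 → ℕ :=
  ![![0,1,2,3,4,5], ![0,1,2,3,4,5], ![1,0,2,3,4,5],
    ![2,0,3,1,4,5], ![1,2,0,3,4,5], ![2,3,0,4,1,5]]

def Rex : Pref 6 := fun j o o' => rkEx j o < rkEx j o'

instance RexDec (j o o' : Fin 6) : Decidable (Rex j o o') :=
  inferInstanceAs (Decidable (rkEx j o < rkEx j o'))

def AvEx : Fin 6 → Fin 6 := ![0,3,1,5,2,4]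
def AinvEx : Fin 6 → Fin 6 := ![0,2,4,1,5,3]

def Aex : Equiv.Perm (Fin 6) :=
  ⟨AvEx, AinvEx, by intro x; fin_cases x <;> rfl, by intro x; fin_cases x <;> rfl⟩

lemma Tunion_succ_ex (r : ℕ) :
    Tunion Rex Aex (r + 1) = Tunion Rex Aex r ∪
      {o | ∃ j : Fin 6, Aex j ∉ Tunion Rex Aex r ∧ IsTopIn Rex j (Tunion Rex Aex r)ᶜ o} := rfl

lemma Tunion1_ex : Tunion Rex Aex 1 = {o : Fin 6 | o.val < 3} := by
  rw [Tunion_succ_ex]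
  ext o
  simp only [Tunion, Set.mem_union, Set.mem_empty_iff_false, Set.mem_setOf_eq,
    Set.mem_compl_iff, IsTopIn, false_or, Set.compl_empty, Set.mem_univ, true_and,
    not_false_eq_true, true_implies]
  constructor
  · rintro ⟨j, h⟩
    revert h; revert o; fin_cases j <;> decide
  · intro h
    revert h; revert o; decide

lemma Tunion2_ex : Tunion Rex Aex 2 = {o : Fin 6 | o.val < 5} := by
  rw [Tunion_succ_ex, Tunion1_ex]
  ext o
  simp only [Set.mem_union, Set.mem_setOf_eq, Set.mem_compl_iff, IsTopIn]
  constructor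
  · rintro (h | ⟨j, hj, ho, h⟩)
    · omega
    · revert ho h; revert o; fin_cases j <;> decide
  · intro h
    revert h; revert o; decide

lemma Tunion3_ex : Tunion Rex Aex 3 = Set.univ := by
  rw [Tunion_succ_ex, Tunion2_ex]
  ext o
  simp only [Set.mem_union, Set.mem_setOf_eq, Set.mem_compl_iff, IsTopIn, Set.mem_univ,
    iff_true]
  by_cases h : o.val < 5
  · exact Or.inl h
  · refine Or.inr ?_
    revert h; revert o; decide

lemma Tunion_ge3_ex : ∀ r : ℕ, Tunion Rex Aex (r + 3) = Set.univ := by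
  intro r
  induction r with
  | zero => exact Tunion3_ex
  | succ n ih =>
    rw [show n + 1 + 3 = (n + 3) + 1 from rfl, Tunion_succ_ex, ih]
    simp

lemma rank_ex_eq (j o : Fin 6) :
    rank Rex j o = (Finset.univ.filter (fun o' => rkEx j o' < rkEx j o ∨ o' = o)).card := by
  rw [rank, ← Set.ncard_coe_finset]
  congr 1
  ext x
  simp [Rex]

/-- FERI does not imply FHR (witnessed with 6 agents and 6 items). -/
theorem feri_not_imp_fhr :
    ∃ R : Pref 6, IsProfile R ∧
      ∃ A : Equiv.Perm (Fin 6), FERI R A ∧ ¬ FHR R A := by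
  refine ⟨Rex, ?_, Aex, ?_, ?_⟩
  · intro j
    exact {
      trichotomous := by
        intro a b
        rcases lt_trichotomy (rkEx j a) (rkEx j b) with h | h | h
        · exact fun h1 _ => absurd h h1
        · have e : a = b := by revert h; revert a b; fin_cases j <;> decide
          exact fun _ _ => e
        · exact fun _ h2 => absurd h h2
      irrefl := fun a => lt_irrefl _
      trans := fun a b c => Nat.lt_trans }
  · intro r o ho
    match r with
    | 0 =>
      obtain ⟨j, hj, ho⟩ := ho
      show IsTopIn Rex (Aex.symm o) (Tunion Rex Aex 0)ᶜ o
      simp only [Tunion, Set.compl_empty, IsTopIn, Set.mem_univ, true_and,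
        true_implies] at ho ⊢
      revert ho; revert o; fin_cases j <;> decide
    | 1 =>
      obtain ⟨j, hj, ho⟩ := ho
      show IsTopIn Rex (Aex.symm o) (Tunion Rex Aex 1)ᶜ o
      rw [Tunion1_ex] at hj ho ⊢
      simp only [IsTopIn, Set.mem_compl_iff, Set.mem_setOf_eq] at ho ⊢
      obtain ⟨ho1, ho2⟩ := ho
      revert ho1 ho2; revert o; revert hj; fin_cases j <;> decide
    | 2 =>
      obtain ⟨j, hj, ho⟩ := ho
      show IsTopIn Rex (Aex.symm o) (Tunion Rex Aex 2)ᶜ o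
      rw [Tunion2_ex] at hj ho ⊢
      simp only [IsTopIn, Set.mem_compl_iff, Set.mem_setOf_eq] at ho ⊢
      obtain ⟨ho1, ho2⟩ := ho
      revert ho1 ho2; revert o; revert hj; fin_cases j <;> decide
    | (n + 3) =>
      obtain ⟨j, hj, -⟩ := ho
      rw [Tunion_ge3_ex] at hj
      exact absurd (Set.mem_univ _) hj
  · intro hFHR
    have h13 := hFHR 1 3
    have e1 : rank Rex 1 (Aex 1) = 4 := by rw [rank_ex_eq]; decide
    have e2 : rank Rex 3 (Aex 1) = 2 := by rw [rank_ex_eq]; decide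
    have e3 : rank Rex 3 (Aex 3) = 6 := by rw [rank_ex_eq]; decide
    rw [e1, e2, e3] at h13
    omega

end FeriPaper
end
end

section
/- There exists a preference profile on an assignment problem with n = 6 agents and 6 items such that no random assignment simultaneously satisfies ex-post favoring-higher-ranks (ex-post FHR), sd-weak-envy-freeness (sd-WEF), and strong equal treatment of equals (SETE); consequently, no mechanism on this instance satisfies all three properties. -/
open Finset

noncomputable section

namespace FeriPaper

/-- Rank table of the counterexample profile. -/
def rkT : Fin 6 → Fin 6 → ℕ :=
  ![![5,1,4,6,3,2], ![1,3,2,4,5,6], ![4,1,5,2,3,6],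
    ![5,4,1,6,2,3], ![6,1,3,2,4,5], ![2,1,4,6,5,3]]

/-- The counterexample profile. -/
def R6 : Pref 6 := fun j o o' => rkT j o < rkT j o'

instance R6.decRel : ∀ j, DecidableRel (R6 j) := fun _ _ _ => Nat.decLt _ _

lemma rank_eq6 : ∀ j o, rank R6 j o = rkT j o := by
  intro j o
  rw [rank, Set.ncard_eq_toFinset_card']
  revert j o
  decide

lemma fin6cases : ∀ x : Fin 6, x = 0 ∨ x = 1 ∨ x = 2 ∨ x = 3 ∨ x = 4 ∨ x = 5 := by decide

lemma profile6 : IsProfile R6 := by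
  intro j
  exact { trichotomous := by
            intro a b hab hba
            rcases Nat.lt_trichotomy (rkT j a) (rkT j b) with h|h|h
            · exact absurd h hab
            · clear hab hba
              revert h; revert a b; fin_cases j <;> decide
            · exact absurd h hba
          irrefl := fun a => Nat.lt_irrefl _
          trans := fun a b c => Nat.lt_trans }

lemma key6 (A : Equiv.Perm (Fin 6)) (hA : FHR R6 A) :
    A 1 = 0 ∧ A 3 = 2 ∧ (A 0 = 1 ∨ A 0 = 5) ∧ (A 5 = 1 ∨ A 5 = 4 ∨ A 5 = 5)
      ∧ A 2 ≠ 5 ∧ A 4 ≠ 5 := by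
  simp only [FHR, rank_eq6] at hA
  have rk_pos : ∀ j o : Fin 6, 1 ≤ rkT j o := by decide
  have h10 : A 1 = 0 := by
    have h : ∀ j : Fin 6, A j = 0 → j = 1 := by
      intro j hj
      rcases hA j 1 with h | h
      · rw [hj] at h
        revert h; fin_cases j <;> simp <;> decide
      · rw [hj] at h
        have h1 : rkT 1 (0 : Fin 6) = 1 := by decide
        have := rk_pos 1 (A 1); omega
    have := h (A.symm 0) (A.apply_symm_apply 0)
    rw [← this]; exact A.apply_symm_apply 0
  have h32 : A 3 = 2 := by
    have h : ∀ j : Fin 6, A j = 2 → j = 3 := by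
      intro j hj
      rcases hA j 3 with h | h
      · rw [hj] at h
        revert h; fin_cases j <;> simp <;> decide
      · rw [hj] at h
        have h1 : rkT 3 (2 : Fin 6) = 1 := by decide
        have := rk_pos 3 (A 3); omega
    have := h (A.symm 2) (A.apply_symm_apply 2)
    rw [← this]; exact A.apply_symm_apply 2
  have inv0 : ∀ x : Fin 6, rkT 0 x < 2 → x = 1 := by decide
  have inv5 : ∀ x : Fin 6, rkT 5 x < 3 → x = 1 ∨ x = 0 := by decide
  have inv2 : ∀ x : Fin 6, rkT 2 x < 2 → x = 1 := by decide
  have inv4 : ∀ x : Fin 6, rkT 4 x < 2 → x = 1 := by decide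
  have h25 : A 2 ≠ 5 := by
    intro h5
    have ha0 : A 0 = 1 := by
      rcases hA 2 0 with h | h
      · rw [h5] at h; exact absurd h (by decide)
      · rw [h5] at h; exact inv0 _ h
    have ha5 : A 5 = 1 ∨ A 5 = 0 := by
      rcases hA 2 5 with h | h
      · rw [h5] at h; exact absurd h (by decide)
      · rw [h5] at h; exact inv5 _ h
    rcases ha5 with h | h
    · exact absurd (A.injective (h.trans ha0.symm)) (by decide)
    · exact absurd (A.injective (h.trans h10.symm)) (by decide)
  have h45 : A 4 ≠ 5 := by
    intro h5
    have ha0 : A 0 = 1 := by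
      rcases hA 4 0 with h | h
      · rw [h5] at h; exact absurd h (by decide)
      · rw [h5] at h; exact inv0 _ h
    have ha5 : A 5 = 1 ∨ A 5 = 0 := by
      rcases hA 4 5 with h | h
      · rw [h5] at h; exact absurd h (by decide)
      · rw [h5] at h; exact inv5 _ h
    rcases ha5 with h | h
    · exact absurd (A.injective (h.trans ha0.symm)) (by decide)
    · exact absurd (A.injective (h.trans h10.symm)) (by decide)
  have h0 : A 0 = 1 ∨ A 0 = 5 := by
    have hne0 : A 0 ≠ 0 := fun h => absurd (A.injective (h.trans h10.symm)) (by decide)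
    have hne2 : A 0 ≠ 2 := fun h => absurd (A.injective (h.trans h32.symm)) (by decide)
    have hne3 : A 0 ≠ 3 := by
      intro h3
      have ha2 : A 2 = 1 := by
        rcases hA 0 2 with h | h
        · rw [h3] at h; exact absurd h (by decide)
        · rw [h3] at h; exact inv2 _ h
      have ha4 : A 4 = 1 := by
        rcases hA 0 4 with h | h
        · rw [h3] at h; exact absurd h (by decide)
        · rw [h3] at h; exact inv4 _ h
      exact absurd (A.injective (ha2.trans ha4.symm)) (by decide)
    have hne4 : A 0 ≠ 4 := by
      intro h4
      have h55 : A 5 = 5 := by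
        have h : ∀ j : Fin 6, A j = 5 → j = 5 := by
          intro j hj
          rcases fin6cases j with rfl|rfl|rfl|rfl|rfl|rfl
          · rw [h4] at hj; exact absurd hj (by decide)
          · rw [h10] at hj; exact absurd hj (by decide)
          · exact absurd hj h25
          · rw [h32] at hj; exact absurd hj (by decide)
          · exact absurd hj h45
          · rfl
        have hs := h (A.symm 5) (A.apply_symm_apply 5)
        conv_lhs => rw [← hs]
        exact A.apply_symm_apply 5
      rcases hA 5 0 with h | h
      · rw [h55] at h; exact absurd h (by decide)
      · rw [h55] at h
        have e : rkT 0 (5:Fin 6) = 2 := by decide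
        rw [e] at h
        have h1 := inv0 _ h
        rw [h1] at h4; exact absurd h4 (by decide)
    rcases fin6cases (A 0) with h|h|h|h|h|h
    · exact absurd h hne0
    · exact Or.inl h
    · exact absurd h hne2
    · exact absurd h hne3
    · exact absurd h hne4
    · exact Or.inr h
  have h5 : A 5 = 1 ∨ A 5 = 4 ∨ A 5 = 5 := by
    have hne0 : A 5 ≠ 0 := fun h => absurd (A.injective (h.trans h10.symm)) (by decide)
    have hne2 : A 5 ≠ 2 := fun h => absurd (A.injective (h.trans h32.symm)) (by decide)
    have hne3 : A 5 ≠ 3 := by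
      intro h3
      have ha2 : A 2 = 1 := by
        rcases hA 5 2 with h | h
        · rw [h3] at h; exact absurd h (by decide)
        · rw [h3] at h; exact inv2 _ h
      have ha4 : A 4 = 1 := by
        rcases hA 5 4 with h | h
        · rw [h3] at h; exact absurd h (by decide)
        · rw [h3] at h; exact inv4 _ h
      exact absurd (A.injective (ha2.trans ha4.symm)) (by decide)
    rcases fin6cases (A 5) with h|h|h|h|h|h
    · exact absurd h hne0
    · exact Or.inl h
    · exact absurd h hne2
    · exact absurd h hne3
    · exact Or.inr (Or.inl h)
    · exact Or.inr (Or.inr h)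
  exact ⟨h10, h32, h0, h5, h25, h45⟩

lemma usum6 (p : Fin 6 → ℝ) (o : Fin 6) :
    upperSum (R6 5) p o = ∑ x, if rkT 5 x < rkT 5 o ∨ x = o then p x else 0 := by
  refine Finset.sum_congr rfl fun x _ => ?_
  by_cases h : x ∈ ucs (R6 5) o
  · rw [Set.indicator_of_mem h, if_pos]; exact h
  · rw [Set.indicator_of_notMem h, if_neg]; exact h

lemma u6_0 (p : Fin 6 → ℝ) : upperSum (R6 5) p 0 = p 0 + p 1 := by
  rw [usum6, Fin.sum_univ_six, if_pos (by decide), if_pos (by decide), if_neg (by decide),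
    if_neg (by decide), if_neg (by decide), if_neg (by decide)]
  ring

lemma u6_1 (p : Fin 6 → ℝ) : upperSum (R6 5) p 1 = p 1 := by
  rw [usum6, Fin.sum_univ_six, if_neg (by decide), if_pos (by decide), if_neg (by decide),
    if_neg (by decide), if_neg (by decide), if_neg (by decide)]
  ring

lemma u6_2 (p : Fin 6 → ℝ) : upperSum (R6 5) p 2 = p 0 + p 1 + p 2 + p 5 := by
  rw [usum6, Fin.sum_univ_six, if_pos (by decide), if_pos (by decide), if_pos (by decide),
    if_neg (by decide), if_neg (by decide), if_pos (by decide)]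
  ring

lemma u6_3 (p : Fin 6 → ℝ) : upperSum (R6 5) p 3 = p 0 + p 1 + p 2 + p 3 + p 4 + p 5 := by
  rw [usum6, Fin.sum_univ_six, if_pos (by decide), if_pos (by decide), if_pos (by decide),
    if_pos (by decide), if_pos (by decide), if_pos (by decide)]

lemma u6_4 (p : Fin 6 → ℝ) : upperSum (R6 5) p 4 = p 0 + p 1 + p 2 + p 4 + p 5 := by
  rw [usum6, Fin.sum_univ_six, if_pos (by decide), if_pos (by decide), if_pos (by decide),
    if_neg (by decide), if_pos (by decide), if_pos (by decide)]
  ring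

lemma u6_5 (p : Fin 6 → ℝ) : upperSum (R6 5) p 5 = p 0 + p 1 + p 5 := by
  rw [usum6, Fin.sum_univ_six, if_pos (by decide), if_pos (by decide), if_neg (by decide),
    if_neg (by decide), if_neg (by decide), if_pos (by decide)]
  ring

lemma cp6_02 : (1:Fin 6) ∈ commonPrefix R6 0 2 := by
  intro x hx; ext y
  simp only [ucs, Set.mem_setOf_eq, R6] at *
  revert hx; revert x y; decide

lemma cp6_04 : (1:Fin 6) ∈ commonPrefix R6 0 4 := by
  intro x hx; ext y
  simp only [ucs, Set.mem_setOf_eq, R6] at *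
  revert hx; revert x y; decide

lemma cp6_05 : (1:Fin 6) ∈ commonPrefix R6 0 5 := by
  intro x hx; ext y
  simp only [ucs, Set.mem_setOf_eq, R6] at *
  revert hx; revert x y; decide

end FeriPaper

namespace FeriPaper
/-- On some 6-agent instance, no random assignment satisfies
ex-post FHR, sd-WEF and SETE simultaneously. -/
theorem no_epFHR_sdWEF_SETE :
    ∃ R : Pref 6, IsProfile R ∧
      ∀ P : Fin 6 → Fin 6 → ℝ, DoublyStochastic P →
        ¬ (ExPost (FHR R) P ∧ sdWEF R P ∧ SETE R P) := by
  refine ⟨R6, profile6, ?_⟩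
  rintro P ⟨hpos, hrow, hcol⟩ ⟨hEP, hWEF, hSETE⟩
  obtain ⟨w, hw0, hw1, hwX, hP⟩ := hEP
  have hzero : ∀ j o : Fin 6, (∀ A : Equiv.Perm (Fin 6), FHR R6 A → A j ≠ o) → P j o = 0 := by
    intro j o h
    rw [hP]
    refine Finset.sum_eq_zero fun A _ => ?_
    rcases eq_or_ne (w A) 0 with h0 | h0
    · rw [h0, zero_mul]
    · simp only [permMatrix]
      rw [if_neg (h A (hwX A h0)), mul_zero]
  have z00 : P 0 0 = 0 := hzero 0 0 fun A hA => by
    rcases (key6 A hA).2.2.1 with h|h <;> (rw [h]; decide)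
  have z02 : P 0 2 = 0 := hzero 0 2 fun A hA => by
    rcases (key6 A hA).2.2.1 with h|h <;> (rw [h]; decide)
  have z03 : P 0 3 = 0 := hzero 0 3 fun A hA => by
    rcases (key6 A hA).2.2.1 with h|h <;> (rw [h]; decide)
  have z04 : P 0 4 = 0 := hzero 0 4 fun A hA => by
    rcases (key6 A hA).2.2.1 with h|h <;> (rw [h]; decide)
  have z11 : P 1 1 = 0 := hzero 1 1 fun A hA => by rw [(key6 A hA).1]; decide
  have z31 : P 3 1 = 0 := hzero 3 1 fun A hA => by rw [(key6 A hA).2.1]; decide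
  have z15 : P 1 5 = 0 := hzero 1 5 fun A hA => by rw [(key6 A hA).1]; decide
  have z35 : P 3 5 = 0 := hzero 3 5 fun A hA => by rw [(key6 A hA).2.1]; decide
  have z25 : P 2 5 = 0 := hzero 2 5 fun A hA => (key6 A hA).2.2.2.2.1
  have z45 : P 4 5 = 0 := hzero 4 5 fun A hA => (key6 A hA).2.2.2.2.2
  have z50 : P 5 0 = 0 := hzero 5 0 fun A hA => by
    rcases (key6 A hA).2.2.2.1 with h|h|h <;> (rw [h]; decide)
  have z52 : P 5 2 = 0 := hzero 5 2 fun A hA => by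
    rcases (key6 A hA).2.2.2.1 with h|h|h <;> (rw [h]; decide)
  have z53 : P 5 3 = 0 := hzero 5 3 fun A hA => by
    rcases (key6 A hA).2.2.2.1 with h|h|h <;> (rw [h]; decide)
  have e02 : P 0 1 = P 2 1 := hSETE 0 2 1 cp6_02
  have e04 : P 0 1 = P 4 1 := hSETE 0 4 1 cp6_04
  have e05 : P 0 1 = P 5 1 := hSETE 0 5 1 cp6_05
  have hc1 := hcol 1; rw [Fin.sum_univ_six] at hc1
  have hc5 := hcol 5; rw [Fin.sum_univ_six] at hc5
  have hr0 := hrow 0; rw [Fin.sum_univ_six] at hr0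
  have hr5 := hrow 5; rw [Fin.sum_univ_six] at hr5
  have v01 : P 0 1 = 1/4 := by linarith
  have v51 : P 5 1 = 1/4 := by linarith
  have v05 : P 0 5 = 3/4 := by linarith
  have v55 : P 5 5 = 1/4 := by linarith
  have hSD : SD (R6 5) (P 0) (P 5) := by
    intro o
    rcases fin6cases o with rfl|rfl|rfl|rfl|rfl|rfl
    · rw [u6_0, u6_0]; linarith
    · rw [u6_1, u6_1]; linarith
    · rw [u6_2, u6_2]; linarith
    · rw [u6_3, u6_3]; linarith
    · rw [u6_4, u6_4]; linarith
    · rw [u6_5, u6_5]; linarith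
  have heq : P 5 = P 0 := hWEF 5 0 hSD
  have : P 5 5 = P 0 5 := by rw [heq]
  linarith

end FeriPaper
end
end

section
/- On the assignment problem with n = 4 agents and 4 items, no mechanism simultaneously satisfies ex-post favoring-eagerness-for-remaining-items (ex-post FERI), strong equal treatment of equals (SETE), and sd-strategyproofness (sd-SP). -/
open Finset

noncomputable section

namespace FeriPaper

/-! ### Auxiliary machinery for the impossibility proof -/

/-- Preference row `a ≻ b ≻ c ≻ d` as a position table. -/
def ra : Fin 4 → Fin 4 := ![0, 1, 2, 3]

/-- Preference row `b ≻ a ≻ c ≻ d` as a position table. -/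
def rb : Fin 4 → Fin 4 := ![1, 0, 2, 3]

def tblB : Fin 4 → Fin 4 → Fin 4 := ![ra, ra, rb, rb]
def tblD : Fin 4 → Fin 4 → Fin 4 := ![rb, ra, rb, rb]

def RB : Pref 4 := fun j o o' => tblB j o < tblB j o'
def RD : Pref 4 := fun j o o' => tblD j o < tblD j o'

instance decRB : ∀ j o o', Decidable (RB j o o') := fun j o o' =>
  inferInstanceAs (Decidable (tblB j o < tblB j o'))
instance decRD : ∀ j o o', Decidable (RD j o o') := fun j o o' =>
  inferInstanceAs (Decidable (tblD j o < tblD j o'))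

lemma isProfile_of_inj (p : Fin 4 → Fin 4 → Fin 4) (h : ∀ j, Function.Injective (p j)) :
    IsProfile (fun j o o' => p j o < p j o') := by
  intro j
  exact { trichotomous := fun a b hab hba => by
            exact h j (le_antisymm (not_lt.mp hba) (not_lt.mp hab))
          irrefl := fun a => lt_irrefl _
          trans := fun a b c => lt_trans }

lemma profB : IsProfile RB :=
  isProfile_of_inj tblB (by decide)

lemma profD : IsProfile RD :=
  isProfile_of_inj tblD (by decide)

/-- Build an `IsTopIn` witness for round 0 (where nothing is assigned yet). -/
lemma istop0 {R : Pref 4} (A : Equiv.Perm (Fin 4)) {k o : Fin 4}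
    (h : ∀ o' : Fin 4, o' ≠ o → R k o o') : IsTopIn R k (Tunion R A 0)ᶜ o :=
  ⟨fun hc => hc, fun o' _ hne => h o' hne⟩

/-- Destruct an `IsTopIn` witness for round 0. -/
lemma istop0_elim {R : Pref 4} {A : Equiv.Perm (Fin 4)} {j o : Fin 4}
    (h : IsTopIn R j (Tunion R A 0)ᶜ o) : ∀ o' : Fin 4, o' ≠ o → R j o o' :=
  fun o' hne => h.2 o' (fun hc => hc) hne

/-- The round-0 consequence of FERI: if `o` is some agent `k`'s overall top item and
`A j = o`, then `o` is also agent `j`'s overall top item. -/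
lemma feri_round0 {R : Pref 4} {A : Equiv.Perm (Fin 4)} (h : FERI R A) {j k o : Fin 4}
    (hk : IsTopIn R k (Tunion R A 0)ᶜ o) (hA : A j = o) :
    IsTopIn R j (Tunion R A 0)ᶜ o := by
  subst hA
  have ho : A j ∈ Tset R A 0 := ⟨k, fun hc => hc, hk⟩
  have h1 := h 0 (A j) ho
  rwa [Equiv.symm_apply_apply] at h1

lemma factB1 : ∀ A : Equiv.Perm (Fin 4), FERI RB A → A 0 ≠ 1 := by
  intro A h hA
  have h1 := feri_round0 h (istop0 A (k := 2) (o := 1) (by decide)) hA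
  exact (by decide : ¬ RB 0 1 0) (istop0_elim h1 0 (by decide))

lemma factB2 : ∀ A : Equiv.Perm (Fin 4), FERI RB A → A 2 ≠ 0 := by
  intro A h hA
  have h1 := feri_round0 h (istop0 A (k := 0) (o := 0) (by decide)) hA
  exact (by decide : ¬ RB 2 0 1) (istop0_elim h1 1 (by decide))

lemma factB3 : ∀ A : Equiv.Perm (Fin 4), FERI RB A → A 3 ≠ 0 := by
  intro A h hA
  have h1 := feri_round0 h (istop0 A (k := 0) (o := 0) (by decide)) hA
  exact (by decide : ¬ RB 3 0 1) (istop0_elim h1 1 (by decide))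

lemma factD1 : ∀ A : Equiv.Perm (Fin 4), FERI RD A → A 0 ≠ 0 := by
  intro A h hA
  have h1 := feri_round0 h (istop0 A (k := 1) (o := 0) (by decide)) hA
  exact (by decide : ¬ RD 0 0 1) (istop0_elim h1 1 (by decide))

lemma factD2 : ∀ A : Equiv.Perm (Fin 4), FERI RD A → A 1 ≠ 1 := by
  intro A h hA
  have h1 := feri_round0 h (istop0 A (k := 0) (o := 1) (by decide)) hA
  exact (by decide : ¬ RD 1 1 0) (istop0_elim h1 0 (by decide))

lemma expost_zero {R : Pref 4} {P : Fin 4 → Fin 4 → ℝ} (h : ExPost (FERI R) P)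
    {j o : Fin 4} (hz : ∀ A : Equiv.Perm (Fin 4), FERI R A → A j ≠ o) : P j o = 0 := by
  obtain ⟨w, hw0, hw1, hX, hP⟩ := h
  rw [hP]
  apply Finset.sum_eq_zero
  intro A _
  rcases eq_or_ne (w A) 0 with h0 | h0
  · simp [h0]
  · have hne := hz A (hX A h0)
    simp [permMatrix, hne]

lemma upperSum_RD0 (p : Fin 4 → ℝ) : upperSum (RD 0) p 0 = p 0 + p 1 := by
  have h0 : (0 : Fin 4) ∈ ucs (RD 0) 0 := Or.inr rfl
  have h1 : (1 : Fin 4) ∈ ucs (RD 0) 0 := Or.inl (by decide)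
  have h2 : (2 : Fin 4) ∉ ucs (RD 0) 0 := fun h =>
    (by decide : ¬ (RD 0 2 0 ∨ (2 : Fin 4) = 0)) h
  have h3 : (3 : Fin 4) ∉ ucs (RD 0) 0 := fun h =>
    (by decide : ¬ (RD 0 3 0 ∨ (3 : Fin 4) = 0)) h
  simp only [upperSum, Fin.sum_univ_four, Set.indicator_of_mem h0 p,
    Set.indicator_of_mem h1 p, Set.indicator_of_notMem h2 p,
    Set.indicator_of_notMem h3 p, add_zero]

lemma cp_mem {R : Pref 4} [∀ j o o', Decidable (R j o o')] {j k o : Fin 4}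
    (h : ∀ x : Fin 4, (R j x o ∨ x = o) →
      ∀ y : Fin 4, (R j y x ∨ y = x) ↔ (R k y x ∨ y = x)) :
    o ∈ commonPrefix R j k := by
  intro x hx
  exact Set.ext (h x hx)

/-- On the 4-agent, 4-item assignment problem, no mechanism satisfies
ex-post FERI, SETE and sd-strategyproofness simultaneously. -/
theorem no_epFERI_SETE_sdSP :
    ¬ ∃ f : Profile 4 → (Fin 4 → Fin 4 → ℝ),
        (∀ R, DoublyStochastic (f R)) ∧
        (∀ R, ExPost (FERI R.1) (f R)) ∧
        (∀ R, SETE R.1 (f R)) ∧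
        (∀ (R R' : Profile 4) (j : Fin 4),
          (∀ k, k ≠ j → R'.1 k = R.1 k) → SD (R.1 j) (f R j) (f R' j)) := by
  rintro ⟨f, hDS, hEP, hSE, hSP⟩
  set BP : Profile 4 := ⟨RB, profB⟩ with hBP
  set DP : Profile 4 := ⟨RD, profD⟩ with hDP
  set P := f BP with hPdef
  set Q := f DP with hQdef
  -- zero entries from ex-post FERI
  have hP01 : P 0 1 = 0 := expost_zero (hEP BP)
    factB1
  have hP20 : P 2 0 = 0 := expost_zero (hEP BP)
    factB2
  have hP30 : P 3 0 = 0 := expost_zero (hEP BP)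
    factB3
  have hQ00 : Q 0 0 = 0 := expost_zero (hEP DP)
    factD1
  have hQ11 : Q 1 1 = 0 := expost_zero (hEP DP)
    factD2
  -- SETE facts
  have hSB : P 0 0 = P 1 0 := hSE BP 0 1 0 (cp_mem (by decide))
  have hSD02 : Q 0 1 = Q 2 1 := hSE DP 0 2 1 (cp_mem (by decide))
  have hSD03 : Q 0 1 = Q 3 1 := hSE DP 0 3 1 (cp_mem (by decide))
  -- column sums
  have hcolP : P 0 0 + P 1 0 + P 2 0 + P 3 0 = 1 := by
    have := (hDS BP).2.2 0
    rwa [Fin.sum_univ_four] at this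
  have hcolQ : Q 0 1 + Q 1 1 + Q 2 1 + Q 3 1 = 1 := by
    have := (hDS DP).2.2 1
    rwa [Fin.sum_univ_four] at this
  -- strategyproofness: true profile D, misreport to B, agent 0
  have hkeq : ∀ k : Fin 4, k ≠ 0 → BP.1 k = DP.1 k := by
    intro k hk
    fin_cases k
    · exact absurd rfl hk
    · rfl
    · rfl
    · rfl
  have hsd := hSP DP BP 0 hkeq 0
  rw [show DP.1 0 = RD 0 from rfl, upperSum_RD0, upperSum_RD0] at hsd
  rw [← hPdef, ← hQdef] at hsd
  linarith


end FeriPaper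
end
end

section
/- For every assignment problem and preference profile, every random assignment satisfying ex-ante favoring-eagerness-for-remaining-items (ea-FERI) also satisfies sd-Pareto-efficiency (sd-PE). -/
/-! If `Q` sd-dominates `P`, compare them column by column along the eating process. Suppose the
columns of the items exhausted before round `r + 1` agree. An agent who has eaten `o` by then
prefers to `o` only exhausted items, so sd-dominance at `o` gives `Q k o ≥ P k o`; as these agents
hold all of `o` under `P`, the columns of `o` agree as well. ea-FERI makes every round exhaust at
least one item, so after `n` rounds every column of `Q` is that of `P`. -/

open Finset

noncomputable section

namespace FeriPaper

section Sums

variable {ι : Type*} [Fintype ι]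

lemma indicator_eq_self_of_sum_le {S : Set ι} {p : ι → ℝ} (hp : 0 ≤ p)
    (h : ∑ i, p i ≤ ∑ i, S.indicator p i) : S.indicator p = p := by
  have hle : ∀ i ∈ univ, S.indicator p i ≤ p i := fun i _ =>
    Set.indicator_le_self' (fun i _ => hp i) i
  funext i
  exact (sum_eq_sum_iff_of_le hle).mp (le_antisymm (sum_le_sum hle) h) i (mem_univ i)

lemma eq_of_le_on_of_sum_le_sum_indicator {S : Set ι} {p q : ι → ℝ} (hp : 0 ≤ p) (hq : 0 ≤ q)
    (hsum : ∑ i, q i = ∑ i, p i) (hS : ∑ i, p i ≤ ∑ i, S.indicator p i)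
    (hle : ∀ i ∈ S, p i ≤ q i) : p = q := by
  have hpS := indicator_eq_self_of_sum_le hp hS
  have hpq : ∀ i ∈ univ, p i ≤ q i := by
    intro i _
    by_cases hi : i ∈ S
    · exact hle i hi
    · rw [← hpS, Set.indicator_of_notMem hi]
      exact hq i
  funext i
  exact (sum_eq_sum_iff_of_le hpq).mp hsum.symm i (mem_univ i)

end Sums

section Dominance

variable {n : ℕ} {pr : Fin n → Fin n → Prop} {p q : Fin n → ℝ} {o : Fin n}

lemma upperSum_sub_upperSum (h : ∀ x, pr x o → q x = p x) :
    upperSum pr q o - upperSum pr p o = q o - p o := by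
  unfold upperSum
  rw [← sum_sub_distrib, sum_eq_single o]
  · simp [ucs]
  · intro x _ hxo
    by_cases hx : pr x o <;> simp [ucs, hx, hxo, h]
  · simp

lemma SD.le_apply_of_eq_above (hsd : SD pr q p) (h : ∀ x, pr x o → q x = p x) : p o ≤ q o := by
  have := hsd o
  linarith [upperSum_sub_upperSum h]

lemma eq_zero_of_upperSum_eq_one (hp : 0 ≤ p) (hsum : ∑ x, p x = 1)
    (hfull : upperSum pr p o = 1) {x : Fin n} (hx : x ∉ ucs pr o) : p x = 0 := by
  have hind := indicator_eq_self_of_sum_le hp (by rw [hsum, ← hfull]; rfl)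
  rw [← hind, Set.indicator_of_notMem hx]

end Dominance

namespace IsProfile

variable {n : ℕ} {R : Pref n}

lemma exists_isTopIn (hR : IsProfile R) (j : Fin n) {S : Set (Fin n)} (hS : S.Nonempty) :
    ∃ o, IsTopIn R j S o := by
  have := hR j
  obtain ⟨m, hm, hmin⟩ := (Finite.wellFounded_of_trans_of_irrefl (R j)).has_min S hS
  refine ⟨m, hm, fun o' ho' hne => ?_⟩
  rcases trichotomous_of (R j) m o' with h | h | h
  · exact h
  · exact absurd h.symm hne
  · exact absurd h (hmin o' ho')

lemma notMem_of_isTopIn (hR : IsProfile R) {j x o : Fin n} {S : Set (Fin n)}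
    (htop : IsTopIn R j S o) (hx : R j x o) : x ∉ S := by
  have := hR j
  exact fun hxS => asymm hx (htop.2 x hxS (ne_of_irrefl hx))

end IsProfile

section Eating

variable {n : ℕ} {R : Pref n} {P : Fin n → Fin n → ℝ}

lemma mem_eaM_succ {r : ℕ} {o : Fin n} :
    o ∈ eaM R P (r + 1) ↔ ∑ k, ((eaState R P r).2 o).indicator (fun k => P k o) k < 1 :=
  Iff.rfl

lemma mem_eaState_snd {r : ℕ} {o k : Fin n} :
    k ∈ (eaState R P r).2 o ↔ ∃ r' ≤ r, k ∈ eaE R P r' o := by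
  induction r with
  | zero => simp only [Nat.le_zero, exists_eq_left]; rfl
  | succ r ih =>
    change k ∈ (eaState R P r).2 o ∪ eaE R P (r + 1) o ↔ _
    rw [Set.mem_union, ih]
    constructor
    · rintro (⟨r', hr', hk⟩ | hk)
      · exact ⟨r', by omega, hk⟩
      · exact ⟨r + 1, le_rfl, hk⟩
    · rintro ⟨r', hr', hk⟩
      rcases Nat.lt_or_eq_of_le hr' with hlt | rfl
      · exact Or.inl ⟨r', by omega, hk⟩
      · exact Or.inr hk

lemma eaM_antitone (hP : ∀ j o, 0 ≤ P j o) : Antitone (eaM R P) := by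
  refine antitone_nat_of_succ_le fun r => ?_
  cases r with
  | zero => exact Set.subset_univ _
  | succ r =>
    intro o ho
    refine mem_eaM_succ.mpr (lt_of_le_of_lt (sum_le_sum fun k _ => ?_) (mem_eaM_succ.mp ho))
    exact Set.indicator_le_indicator_of_subset Set.subset_union_left (fun k => hP k o) k

/-- Every item that `k` prefers to `o` was exhausted before `k` started eating `o`. -/
lemma le_apply_of_mem_eaState_snd (hR : IsProfile R) (hP : ∀ j o, 0 ≤ P j o)
    {Q : Fin n → Fin n → ℝ} (hsd : ∀ j, SD (R j) (Q j) (P j)) {r : ℕ}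
    (hagree : ∀ x ∉ eaM R P r, ∀ k, Q k x = P k x) {o k : Fin n}
    (hk : k ∈ (eaState R P r).2 o) : P k o ≤ Q k o := by
  obtain ⟨r', hr', htop⟩ := mem_eaState_snd.mp hk
  refine (hsd k).le_apply_of_eq_above fun x hx => hagree x (fun hxr => ?_) k
  exact hR.notMem_of_isTopIn htop hx (eaM_antitone hP hr' hxr)

lemma apply_eq_of_notMem_eaM (hR : IsProfile R) (hP : DoublyStochastic P)
    {Q : Fin n → Fin n → ℝ} (hQ : DoublyStochastic Q) (hsd : ∀ j, SD (R j) (Q j) (P j))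
    (r : ℕ) : ∀ o ∉ eaM R P r, ∀ k, Q k o = P k o := by
  induction r with
  | zero => exact fun o ho => absurd (Set.mem_univ o) ho
  | succ r ih =>
    intro o ho k
    have hcol : (fun k => P k o) = fun k => Q k o := by
      refine eq_of_le_on_of_sum_le_sum_indicator (S := (eaState R P r).2 o)
        (fun k => hP.1 k o) (fun k => hQ.1 k o) ?_ ?_ ?_
      · rw [hQ.2.2 o, hP.2.2 o]
      · rw [hP.2.2 o]
        exact not_lt.mp ho
      · exact fun k hk => le_apply_of_mem_eaState_snd hR hP.1 hsd ih hk
    exact (congrFun hcol k).symm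

/-- If a round exhausts no item, ea-FERI forces every remaining agent to spend all of its mass on
its favourite remaining item, so every remaining item has been fully eaten already. -/
lemma eaM_eq_empty_of_succ_eq (hR : IsProfile R) (hP : DoublyStochastic P) (h : EaFERI R P)
    {r : ℕ} (heq : eaM R P (r + 1) = eaM R P r) : eaM R P r = ∅ := by
  refine Set.eq_empty_of_forall_notMem fun o ho => ?_
  choose top htop using fun k => hR.exists_isTopIn k ⟨o, ho⟩
  have hzero : ∀ k, top k ≠ o → P k o = 0 := by
    intro k hko
    have hfull : upperSum (R k) (P k) (top k) = 1 :=
      h (r + 1) (top k) (heq ▸ (htop k).1) k ⟨r, r.lt_succ_self, htop k⟩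
    refine eq_zero_of_upperSum_eq_one (hP.1 k) (hP.2.1 k) hfull ?_
    rintro (hrel | rfl)
    · exact hR.notMem_of_isTopIn (htop k) hrel ho
    · exact hko rfl
  have hmass : ∑ k, ((eaState R P r).2 o).indicator (fun k => P k o) k = 1 := by
    rw [← hP.2.2 o]
    refine sum_congr rfl fun k _ => ?_
    by_cases hko : top k = o
    · have hk : k ∈ (eaState R P r).2 o := mem_eaState_snd.mpr ⟨r, le_rfl, hko ▸ htop k⟩
      rw [Set.indicator_of_mem hk]
    · by_cases hk : k ∈ (eaState R P r).2 o
      · rw [Set.indicator_of_mem hk]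
      · rw [Set.indicator_of_notMem hk, hzero k hko]
  exact (mem_eaM_succ.mp (heq ▸ ho)).ne hmass

lemma ncard_eaM_le (hR : IsProfile R) (hP : DoublyStochastic P) (h : EaFERI R P) (r : ℕ) :
    (eaM R P r).ncard ≤ n - r := by
  induction r with
  | zero => simp [eaM, eaState]
  | succ r ih =>
    have hsub : eaM R P (r + 1) ⊆ eaM R P r := eaM_antitone hP.1 r.le_succ
    rcases hsub.eq_or_ssubset with heq | hlt
    · simp [heq, eaM_eq_empty_of_succ_eq hR hP h heq]
    · have := Set.ncard_lt_ncard hlt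
      omega

lemma eaM_eq_empty (hR : IsProfile R) (hP : DoublyStochastic P) (h : EaFERI R P) :
    eaM R P n = ∅ :=
  (Set.ncard_eq_zero (s := eaM R P n)).mp (by simpa using ncard_eaM_le hR hP h n)

end Eating

/-- Every ea-FERI random assignment is sd-Pareto-efficient. -/
theorem eaFERI_implies_sdPE {n : ℕ} (R : Pref n) (hR : IsProfile R)
    (P : Fin n → Fin n → ℝ) (hP : DoublyStochastic P) (h : EaFERI R P) :
    SdPE R P := by
  rintro ⟨Q, hQ, hQP, hsd⟩
  refine hQP (funext fun j => funext fun o => ?_)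
  refine apply_eq_of_notMem_eaM hR hP hQ hsd n o ?_ j
  rw [eaM_eq_empty hR hP h]
  exact Set.notMem_empty o

end FeriPaper
end
end
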